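/- arXiv:2507.08186 — 2 statements merged into one kernel-verified Lean document; each statement's English description precedes it below -/
import Mathlib

section
/- Let (X,μ,T,α) be a Gibbs–Markov map with full branches, G a metrizable locally compact topological group with left Haar measure m_G, and ψ:X→G continuous. Fix g∈G and a bounded set E⊆G containing the identity with m_G(E)=m_G(E∖∂E)>0; assume condition (C) holds at g for E, and assume μ^n(Eg):=μ({x:ψ_n(x)∈Eg})>0 for all sufficiently large n. Then for every k∈ℕ and every u∈α_k, μ(u∩{x:ψ_n(x)∈Eg}) / μ({x:ψ_n(x)∈Eg}) → μ(u) as n→∞. -/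
/-
Fix `ε > 0` and write `Sₙ = {ψₙ ∈ E g}`. For large `n`, condition (C) provides a level `n' ≥ k`
at which every `n'`-cylinder `b` has `μ(b ∩ Sₙ)/μ(b)` within a factor `1 + ε` of `μ(Sₙ)`.
A `k`-cylinder `u` is the countable disjoint union of the `n'`-cylinders it contains, so summing
these bounds shows that `μ(u ∩ Sₙ)/μ(Sₙ)` lies within a factor `1 + ε` of `μ(u)`.
-/

open MeasureTheory Filter Topology Set
open scoped ENNReal

noncomputable section

/-- The cocycle `ψ_n(x) = ψ(T^{n-1} x) ⋯ ψ(T x) · ψ(x)` driven by `T`. -/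
def cocycle {X G : Type*} [Monoid G] (T : X → X) (ψ : X → G) : ℕ → X → G
  | 0, _ => 1
  | n + 1, x => ψ (T^[n] x) * cocycle T ψ n x

/-- The collection `α_n` of (nonempty) `n`-cylinders `⋂_{j<n} T^{-j} a_j`, `a_j ∈ α`. -/
def cylinders {X : Type*} (T : X → X) (α : Set (Set X)) (n : ℕ) : Set (Set X) :=
  {c | c.Nonempty ∧ ∃ a : Fin n → Set X, (∀ j, a j ∈ α) ∧ c = ⋂ j : Fin n, T^[(j : ℕ)] ⁻¹' a j}

/-- Birkhoff (ergodic) sums `φ_n = ∑_{j<n} φ ∘ T^j`. -/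
def birkhoff {X : Type*} (T : X → X) (φ : X → ℝ) (n : ℕ) (x : X) : ℝ :=
  ∑ j ∈ Finset.range n, φ (T^[j] x)

/-- A Gibbs–Markov map with full branches: `μ` a Borel probability measure, `T`
measure-preserving, ergodic and topologically mixing, Markov with full branches for the
countable partition `α`, with big images, and a potential `φ` (the log Jacobian
`log dμ/d(μ∘T)`) that is locally Hölder (w.r.t. the separation metric, expressed through
cylinders) and has the Gibbs property. -/
structure IsGibbsMarkov {X : Type*} [MetricSpace X] [MeasurableSpace X]
    (μ : Measure X) (T : X → X) (α : Set (Set X)) (φ : X → ℝ) : Prop where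
  prob : IsProbabilityMeasure μ
  measurable_T : Measurable T
  measurePreserving : MeasurePreserving T μ μ
  ergodic : Ergodic T μ
  topMixing : ∀ U V : Set X, IsOpen U → IsOpen V → U.Nonempty → V.Nonempty →
    ∃ N, ∀ n ≥ N, (U ∩ T^[n] ⁻¹' V).Nonempty
  countable : α.Countable
  measurableSet : ∀ a ∈ α, MeasurableSet a
  nonempty : ∀ a ∈ α, a.Nonempty
  pairwiseDisjoint : α.PairwiseDisjoint id
  cover : ⋃₀ α = univ
  fullBranches : ∀ a ∈ α, Set.BijOn T a univ
  bigImages : ∃ c : ℝ≥0∞, 0 < c ∧ ∀ a ∈ α, c ≤ μ (T '' a)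
  holder : ∃ C > (0 : ℝ), ∃ β ∈ Set.Ioo (0 : ℝ) 1, ∀ n, ∀ c ∈ cylinders T α n,
    ∀ x ∈ c, ∀ y ∈ c, |φ x - φ y| ≤ C * β ^ n
  gibbs : ∃ C > (0 : ℝ), ∀ n : ℕ, ∀ c ∈ cylinders T α (n + 1), ∀ x ∈ c,
    (μ c).toReal / C ≤ Real.exp (birkhoff T φ (n + 1) x) ∧
    Real.exp (birkhoff T φ (n + 1) x) ≤ C * (μ c).toReal

/-- Condition (D) at `g ∈ G`. -/
def CondD {X G : Type*} [MeasurableSpace X] [Group G]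
    (μ : Measure X) (T : X → X) (α : Set (Set X)) (ψ : X → G) (g : G) : Prop :=
  ∀ ε > (0 : ℝ), ∀ n₀ : ℕ, ∃ n₁ > n₀, ∀ n ≥ n₁, ∃ n' ∈ Set.Icc n₀ n₁,
    ∀ b ∈ cylinders T α n',
      (μ {x | cocycle T ψ n x = g}).toReal / (1 + ε) ≤
          (μ (b ∩ {x | cocycle T ψ n x = g})).toReal / (μ b).toReal ∧
      (μ (b ∩ {x | cocycle T ψ n x = g})).toReal / (μ b).toReal ≤
          (1 + ε) * (μ {x | cocycle T ψ n x = g}).toReal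

/-- Right translate `E·g = {h·g : h ∈ E}` of a subset of a group. -/
def rmul {G : Type*} [Group G] (E : Set G) (g : G) : Set G := (· * g) '' E

/-- Condition (C) at `g ∈ G` for the bounded set `E ∋ e`. -/
def CondC {X G : Type*} [MeasurableSpace X] [Group G]
    (μ : Measure X) (T : X → X) (α : Set (Set X)) (ψ : X → G) (E : Set G) (g : G) : Prop :=
  ∀ ε > (0 : ℝ), ∀ n₀ : ℕ, ∃ n₁ > n₀, ∀ n ≥ n₁, ∃ n' ∈ Set.Icc n₀ n₁,
    ∀ b ∈ cylinders T α n',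
      (μ {x | cocycle T ψ n x ∈ rmul E g}).toReal / (1 + ε) ≤
          (μ (b ∩ {x | cocycle T ψ n x ∈ rmul E g})).toReal / (μ b).toReal ∧
      (μ (b ∩ {x | cocycle T ψ n x ∈ rmul E g})).toReal / (μ b).toReal ≤
          (1 + ε) * (μ {x | cocycle T ψ n x ∈ rmul E g}).toReal

/-- Condition (S): symmetry of the cocycle via a commuting, continuous (with continuous
inverse), invertible, measure-preserving map `S`. -/
def CondS {X G : Type*} [TopologicalSpace X] [MeasurableSpace X] [Group G]
    (μ : Measure X) (T : X → X) (ψ : X → G) : Prop :=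
  ∃ S : X ≃ₜ X, MeasurePreserving S μ μ ∧ (∀ x, S (T x) = T (S x)) ∧
    ∀ x, ψ (S x) = (ψ x)⁻¹

/-- Condition (CM) for the pair `(E, g)` and the set `F`: a quantitative mixing-type
inequality for the skew product `T_ψ(x,h) = (Tx, ψ(x)h)` on `X × G`. -/
def CondCM {X G : Type*} [MeasurableSpace X] [Group G] [TopologicalSpace G]
    [MeasurableSpace G]
    (μ : Measure X) (T : X → X) (α : Set (Set X)) (ψ : X → G)
    (mG : Measure G) (E : Set G) (g : G) (F : Set G) : Prop :=
  ∀ A : Set G, IsCompact (closure A) → mG (frontier A) = 0 →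
    ∀ k : ℕ, ∀ a ∈ cylinders T α k, ∃ N : ℕ, ∀ n ≥ N,
      (μ.prod mG) ((a ×ˢ F) ∩ {p : X × G | cocycle T ψ n p.1 * p.2 ∈ A}) ≤
        μ a * mG F * (mG A / mG E) * μ {x | cocycle T ψ n x ∈ rmul E g}

lemma tendsto_of_forall_eventually_mem_Icc_div_mul {ι : Type*} {l : Filter ι} {f : ι → ℝ}
    {x : ℝ} (h : ∀ ε > 0, ∀ᶠ i in l, f i ∈ Icc (x / (1 + ε)) ((1 + ε) * x)) :
    Tendsto f l (𝓝 x) := by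
  have hone : Tendsto (fun ε : ℝ => 1 + ε) (𝓝[>] 0) (𝓝 1) :=
    tendsto_nhdsWithin_of_tendsto_nhds <| by simpa using (tendsto_id (x := 𝓝 (0 : ℝ))).const_add 1
  have hlo : Tendsto (fun ε : ℝ => x / (1 + ε)) (𝓝[>] 0) (𝓝 x) := by
    simpa [div_eq_mul_inv] using (hone.inv₀ one_ne_zero).const_mul x
  have hhi : Tendsto (fun ε : ℝ => (1 + ε) * x) (𝓝[>] 0) (𝓝 x) := by
    simpa using hone.mul_const x
  refine tendsto_order.2 ⟨fun a ha => ?_, fun b hb => ?_⟩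
  · obtain ⟨ε, hεa, hε⟩ := ((hlo.eventually (lt_mem_nhds ha)).and self_mem_nhdsWithin).exists
    exact (h ε hε).mono fun i hi => hεa.trans_le hi.1
  · obtain ⟨ε, hεb, hε⟩ := ((hhi.eventually (gt_mem_nhds hb)).and self_mem_nhdsWithin).exists
    exact (h ε hε).mono fun i hi => hi.2.trans_lt hεb

lemma mul_le_and_le_mul_of_div_mem_Icc {p q lo hi : ℝ} (hp : 0 ≤ p) (hpq : p ≤ q)
    (h : p / q ∈ Icc lo hi) : lo * q ≤ p ∧ p ≤ hi * q := by
  rcases (hp.trans hpq).eq_or_lt with hq | hq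
  · obtain rfl : p = 0 := le_antisymm (hq ▸ hpq) hp
    simp [← hq]
  · exact ⟨(le_div_iff₀ hq).1 h.1, (div_le_iff₀ hq).1 h.2⟩

namespace MeasureTheory

variable {X : Type*} [MeasurableSpace X]

lemma measure_sUnion_le_of_forall_le {ν ρ : Measure X} {B : Set (Set X)} (hBc : B.Countable)
    (hBd : B.PairwiseDisjoint id) (hBm : ∀ b ∈ B, MeasurableSet b)
    (h : ∀ b ∈ B, ν b ≤ ρ b) : ν (⋃₀ B) ≤ ρ (⋃₀ B) := by
  rw [measure_sUnion hBc hBd hBm, measure_sUnion hBc hBd hBm]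
  exact ENNReal.tsum_le_tsum fun b => h b b.2

lemma measureReal_sUnion_le_of_forall_le {ν ρ : Measure X} [IsFiniteMeasure ν]
    [IsFiniteMeasure ρ] {B : Set (Set X)} (hBc : B.Countable) (hBd : B.PairwiseDisjoint id)
    (hBm : ∀ b ∈ B, MeasurableSet b) (h : ∀ b ∈ B, ν.real b ≤ ρ.real b) :
    ν.real (⋃₀ B) ≤ ρ.real (⋃₀ B) :=
  (ENNReal.toReal_le_toReal (measure_ne_top _ _) (measure_ne_top _ _)).2 <|
    measure_sUnion_le_of_forall_le hBc hBd hBm fun b hb =>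
      (ENNReal.toReal_le_toReal (measure_ne_top _ _) (measure_ne_top _ _)).1 (h b hb)

lemma measureReal_sUnion_inter_bounds {μ : Measure X} [IsFiniteMeasure μ] {B : Set (Set X)}
    (hBc : B.Countable) (hBd : B.PairwiseDisjoint id) (hBm : ∀ b ∈ B, MeasurableSet b)
    {S : Set X} {c d : ℝ} (hc : 0 ≤ c) (hd : 0 ≤ d)
    (h : ∀ b ∈ B, c * μ.real b ≤ μ.real (b ∩ S) ∧ μ.real (b ∩ S) ≤ d * μ.real b) :
    c * μ.real (⋃₀ B) ≤ μ.real (⋃₀ B ∩ S) ∧ μ.real (⋃₀ B ∩ S) ≤ d * μ.real (⋃₀ B) := by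
  lift c to NNReal using hc
  lift d to NNReal using hd
  have hrestrict : ∀ b ∈ B, (μ.restrict S).real b = μ.real (b ∩ S) := fun b hb =>
    measureReal_restrict_apply (hBm b hb)
  rw [← measureReal_restrict_apply (MeasurableSet.sUnion hBc hBm)]
  constructor
  · simpa using measureReal_sUnion_le_of_forall_le (ν := c • μ) (ρ := μ.restrict S) hBc hBd hBm
      fun b hb => by simpa [hrestrict b hb] using (h b hb).1
  · simpa using measureReal_sUnion_le_of_forall_le (ν := μ.restrict S) (ρ := d • μ) hBc hBd hBm
      fun b hb => by simpa [hrestrict b hb] using (h b hb).2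

end MeasureTheory

section Cylinders

variable {X : Type*} {T : X → X} {α : Set (Set X)}

lemma mem_iInter_iterate_preimage {n : ℕ} {a : Fin n → Set X} {x : X} :
    x ∈ ⋂ j : Fin n, T^[(j : ℕ)] ⁻¹' a j ↔ ∀ j : Fin n, T^[(j : ℕ)] x ∈ a j := by
  simp only [mem_iInter, mem_preimage]

lemma measurableSet_of_mem_cylinders [MeasurableSpace X] (hT : Measurable T)
    (hα : ∀ a ∈ α, MeasurableSet a) {n : ℕ} {c : Set X} (hc : c ∈ cylinders T α n) :
    MeasurableSet c := by
  obtain ⟨-, a, ha, rfl⟩ := hc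
  exact MeasurableSet.iInter fun j => (hα _ (ha j)).preimage (hT.iterate j)

lemma countable_cylinders (hα : α.Countable) (n : ℕ) : (cylinders T α n).Countable := by
  refine ((Set.countable_pi fun _ => hα).image
    fun a : Fin n → Set X => ⋂ j : Fin n, T^[(j : ℕ)] ⁻¹' a j).mono ?_
  rintro c ⟨-, a, ha, rfl⟩
  exact ⟨a, ha, rfl⟩

lemma pairwiseDisjoint_cylinders (hdisj : α.PairwiseDisjoint id) (n : ℕ) :
    (cylinders T α n).PairwiseDisjoint id := by
  rintro c ⟨-, a, ha, rfl⟩ c' ⟨-, a', ha', rfl⟩ hne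
  refine Set.disjoint_left.2 fun x hx hx' => hne ?_
  rw [id_eq, mem_iInter_iterate_preimage] at hx hx'
  rw [funext fun j => hdisj.elim_set (ha j) (ha' j) _ (hx j) (hx' j)]

lemma exists_mem_cylinders (hcov : ⋃₀ α = univ) (n : ℕ) (x : X) :
    ∃ c ∈ cylinders T α n, x ∈ c := by
  choose a ha hxa using fun j : Fin n => mem_sUnion.1 (hcov ▸ mem_univ (T^[(j : ℕ)] x))
  have hx : x ∈ ⋂ j : Fin n, T^[(j : ℕ)] ⁻¹' a j := mem_iInter_iterate_preimage.2 hxa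
  exact ⟨_, ⟨⟨x, hx⟩, a, ha, rfl⟩, hx⟩

lemma subset_of_mem_cylinders_of_le (hdisj : α.PairwiseDisjoint id) {k n : ℕ} (hkn : k ≤ n)
    {u b : Set X} (hu : u ∈ cylinders T α k) (hb : b ∈ cylinders T α n) {x : X} (hxb : x ∈ b)
    (hxu : x ∈ u) : b ⊆ u := by
  obtain ⟨-, a', ha', rfl⟩ := hu
  obtain ⟨-, a, ha, rfl⟩ := hb
  rw [mem_iInter_iterate_preimage] at hxb hxu
  intro y hy
  rw [mem_iInter_iterate_preimage] at hy ⊢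
  intro j
  have hj := hy ⟨j, j.2.trans_le hkn⟩
  rwa [hdisj.elim_set (ha _) (ha' j) _ (hxb ⟨j, j.2.trans_le hkn⟩) (hxu j)] at hj

lemma sUnion_cylinders_subset_eq (hdisj : α.PairwiseDisjoint id) (hcov : ⋃₀ α = univ)
    {k n : ℕ} (hkn : k ≤ n) {u : Set X} (hu : u ∈ cylinders T α k) :
    ⋃₀ {b ∈ cylinders T α n | b ⊆ u} = u := by
  refine subset_antisymm (sUnion_subset fun b hb => hb.2) fun x hx => ?_
  obtain ⟨b, hb, hxb⟩ := exists_mem_cylinders hcov n x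
  exact ⟨b, ⟨hb, subset_of_mem_cylinders_of_le hdisj hkn hu hb hxb hx⟩, hxb⟩

lemma measureReal_inter_div_mem_Icc_of_cylinders [MeasurableSpace X] {μ : Measure X}
    [IsFiniteMeasure μ] (hT : Measurable T) (hα : ∀ a ∈ α, MeasurableSet a)
    (hαc : α.Countable) (hdisj : α.PairwiseDisjoint id) (hcov : ⋃₀ α = univ) {k n : ℕ}
    (hkn : k ≤ n) {u : Set X} (hu : u ∈ cylinders T α k) {S : Set X} (hS : 0 < μ.real S)
    {ε : ℝ} (hε : 0 < ε)
    (h : ∀ b ∈ cylinders T α n,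
      μ.real (b ∩ S) / μ.real b ∈ Icc (μ.real S / (1 + ε)) ((1 + ε) * μ.real S)) :
    μ.real (u ∩ S) / μ.real S ∈ Icc (μ.real u / (1 + ε)) ((1 + ε) * μ.real u) := by
  have hbounds := measureReal_sUnion_inter_bounds (μ := μ) (S := S)
    (B := {b ∈ cylinders T α n | b ⊆ u})
    ((countable_cylinders hαc n).mono fun b hb => hb.1)
    ((pairwiseDisjoint_cylinders hdisj n).subset fun b hb => hb.1)
    (fun b hb => measurableSet_of_mem_cylinders hT hα hb.1) (by positivity) (by positivity)
    fun b hb => mul_le_and_le_mul_of_div_mem_Icc measureReal_nonneg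
      (measureReal_mono inter_subset_left) (h b hb.1)
  rw [sUnion_cylinders_subset_eq hdisj hcov hkn hu] at hbounds
  constructor
  · rw [le_div_iff₀ hS]
    exact (by ring : μ.real u / (1 + ε) * μ.real S = _).trans_le hbounds.1
  · rw [div_le_iff₀ hS]
    exact hbounds.2.trans_eq (by ring)

end Cylinders

theorem mn_tendsto_continuous_general
    {X : Type*} [MetricSpace X] [MeasurableSpace X]
    {G : Type*} [Group G]
    {μ : Measure X} {T : X → X} {α : Set (Set X)} {φ : X → ℝ}
    (hGM : IsGibbsMarkov μ T α φ)
    {ψ : X → G}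
    (g : G) (E : Set G)
    (hC : CondC μ T α ψ E g)
    (hgpos : ∃ N : ℕ, ∀ n ≥ N, 0 < μ {x | cocycle T ψ n x ∈ rmul E g}) :
    ∀ k : ℕ, ∀ u ∈ cylinders T α k,
      Tendsto (fun n : ℕ =>
          (μ (u ∩ {x | cocycle T ψ n x ∈ rmul E g})).toReal /
            (μ {x | cocycle T ψ n x ∈ rmul E g}).toReal) atTop (𝓝 (μ u).toReal) := by
  have := hGM.prob
  obtain ⟨N, hN⟩ := hgpos
  intro k u hu
  refine tendsto_of_forall_eventually_mem_Icc_div_mul fun ε hε => ?_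
  obtain ⟨n₁, -, hn₁⟩ := hC ε hε k
  filter_upwards [eventually_ge_atTop n₁, eventually_ge_atTop N] with n hn hNn
  obtain ⟨n', ⟨hkn', -⟩, hb⟩ := hn₁ n hn
  exact measureReal_inter_div_mem_Icc_of_cylinders hGM.measurable_T hGM.measurableSet
    hGM.countable hGM.pairwiseDisjoint hGM.cover hkn' hu
    (ENNReal.toReal_pos (hN n hNn).ne' (measure_ne_top _ _)) hε hb

/-- Under condition (C) at `g` for `E`, and eventual positivity of
`μ^n(Eg)`, the masses `μ(u ∩ {ψ_n ∈ Eg}) / μ({ψ_n ∈ Eg})` of any cylinder `u` converge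
to `μ(u)`. -/
theorem mn_tendsto_continuous
    {X : Type*} [MetricSpace X] [MeasurableSpace X] [BorelSpace X]
    {G : Type*} [Group G] [TopologicalSpace G] [IsTopologicalGroup G]
    [TopologicalSpace.MetrizableSpace G] [LocallyCompactSpace G]
    [MeasurableSpace G] [BorelSpace G]
    (mG : Measure G) [mG.IsHaarMeasure]
    {μ : Measure X} {T : X → X} {α : Set (Set X)} {φ : X → ℝ}
    (hGM : IsGibbsMarkov μ T α φ)
    {ψ : X → G} (hψcont : Continuous ψ)
    (g : G) (E : Set G) (hEbdd : IsCompact (closure E)) (hEe : (1 : G) ∈ E)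
    (hEfr : mG E = mG (E \ frontier E)) (hEpos : 0 < mG E)
    (hC : CondC μ T α ψ E g)
    (hgpos : ∃ N : ℕ, ∀ n ≥ N, 0 < μ {x | cocycle T ψ n x ∈ rmul E g}) :
    ∀ k : ℕ, ∀ u ∈ cylinders T α k,
      Tendsto (fun n : ℕ =>
          (μ (u ∩ {x | cocycle T ψ n x ∈ rmul E g})).toReal /
            (μ {x | cocycle T ψ n x ∈ rmul E g}).toReal) atTop (𝓝 (μ u).toReal) :=
  mn_tendsto_continuous_general hGM g E hC hgpos
end
end

section
/- Let (X,μ,T,α) be a Gibbs–Markov map with full branches in which every cylinder has positive μ-measure, G a countable discrete group with identity e, and ψ:X→G constant on each element of α with e∈ψ(X). Write μ^n(e)=μ({x∈X : ψ_n(x)=e}). Then the limit lim_{n→∞} (1/n)·log μ^n(e) exists and is finite (in particular it lies in [−∞,0] and is not −∞). -/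
open MeasureTheory Filter Topology Set
open scoped ENNReal

noncomputable section

/-!
The level sets `E_n = {ψ_n = e}` are unions of `n`-cylinders, because `ψ` is constant on the
elements of `α`. With full branches, `a ∩ T^{-n} b` is again a nonempty cylinder for any cylinders
`a ∈ α_n`, `b ∈ α_m`, and the Gibbs property with constant `C` together with
`φ_{n+m} = φ_n + φ_m ∘ T^n` gives `μ(a) μ(b) ≤ C³ μ(a ∩ T^{-n} b)`. Summing over cylinders and
using `ψ_{n+m} = (ψ_m ∘ T^n) · ψ_n` yields `μ(E_n) μ(E_m) ≤ C³ μ(E_{n+m})`, so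
`n ↦ 3 log C - log μ(E_n)` is subadditive and Fekete's lemma applies. The logarithms are finite
because `E_n` contains the cylinder `a ∩ T⁻¹a ∩ ⋯ ∩ T^{-(n-1)}a` of an `a ∈ α` on which `ψ = e`,
and the Gibbs property gives every cylinder positive mass.
-/

theorem exists_tendsto_log_div_of_supermultiplicative {v : ℕ → ℝ} {K : ℝ} (hK : 1 ≤ K)
    (hpos : ∀ n, 0 < v n) (hle : ∀ n, v n ≤ 1)
    (hmul : ∀ n m, v (n + 1) * v (m + 1) ≤ K * v (n + 1 + (m + 1))) :
    ∃ L ≤ 0, Tendsto (fun n : ℕ => Real.log (v n) / n) atTop (𝓝 L) := by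
  set u : ℕ → ℝ := fun n => Real.log K - Real.log (v n)
  have hu_nonneg : ∀ n, 0 ≤ u n := fun n => by
    linarith [Real.log_nonneg hK, Real.log_nonpos (hpos n).le (hle n)]
  have hu : Subadditive u := by
    rintro (_ | n) (_ | m)
    · linarith [hu_nonneg 0]
    · rw [zero_add]; linarith [hu_nonneg 0]
    · rw [add_zero]; linarith [hu_nonneg 0]
    · have h := Real.log_le_log (mul_pos (hpos _) (hpos _)) (hmul n m)
      rw [Real.log_mul (hpos _).ne' (hpos _).ne',
        Real.log_mul (by linarith) (hpos _).ne'] at h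
      simp only [u]
      linarith
  have hu_div_nonneg : ∀ n : ℕ, 0 ≤ u n / n := fun n => div_nonneg (hu_nonneg n) n.cast_nonneg
  have hlim := hu.tendsto_lim ⟨0, forall_mem_range.mpr hu_div_nonneg⟩
  refine ⟨-hu.lim, neg_nonpos.mpr (ge_of_tendsto' hlim hu_div_nonneg), ?_⟩
  have hdiff := (tendsto_const_div_atTop_nhds_zero_nat (Real.log K)).sub hlim
  rw [zero_sub] at hdiff
  refine hdiff.congr fun n => ?_
  simp only [u]
  ring

section Cocycle

variable {X : Type*} (T : X → X)

theorem cocycle_add {G : Type*} [Monoid G] (ψ : X → G) (n m : ℕ) (x : X) :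
    cocycle T ψ (n + m) x = cocycle T ψ m (T^[n] x) * cocycle T ψ n x := by
  induction m with
  | zero => simp [cocycle]
  | succ m ih =>
    rw [← add_assoc, cocycle, cocycle, ih, add_comm n m, Function.iterate_add_apply, mul_assoc]

theorem cocycle_eq_one_of_forall {G : Type*} [Monoid G] {ψ : X → G} {x : X} :
    ∀ {n : ℕ}, (∀ k < n, ψ (T^[k] x) = 1) → cocycle T ψ n x = 1
  | 0, _ => rfl
  | n + 1, h => by
    change ψ (T^[n] x) * cocycle T ψ n x = 1
    rw [h n n.lt_succ_self, cocycle_eq_one_of_forall fun k hk => h k (hk.trans n.lt_succ_self),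
      one_mul]

theorem birkhoff_add (φ : X → ℝ) (n m : ℕ) (x : X) :
    birkhoff T φ (n + m) x = birkhoff T φ n x + birkhoff T φ m (T^[n] x) := by
  rw [birkhoff, birkhoff, birkhoff, Finset.sum_range_add]
  simp only [← Function.iterate_add_apply, add_comm n]

end Cocycle

section Cylinder

variable {X : Type*} {T : X → X} {α : Set (Set X)}

def cylinderOf (T : X → X) {n : ℕ} (s : Fin n → α) : Set X :=
  ⋂ j : Fin n, T^[(j : ℕ)] ⁻¹' (s j : Set X)

theorem mem_cylinderOf {n : ℕ} {s : Fin n → α} {x : X} :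
    x ∈ cylinderOf T s ↔ ∀ j : Fin n, T^[(j : ℕ)] x ∈ (s j : Set X) :=
  mem_iInter

theorem cylinderOf_zero (s : Fin 0 → α) : cylinderOf T s = univ := by
  simp [cylinderOf]

theorem cylinderOf_succ {n : ℕ} (s : Fin (n + 1) → α) :
    cylinderOf T s = (s 0 : Set X) ∩ T ⁻¹' cylinderOf T (Fin.tail s) := by
  ext x
  simp only [mem_cylinderOf, mem_inter_iff, mem_preimage, Fin.forall_fin_succ, Fin.val_zero,
    Function.iterate_zero_apply, Fin.val_succ, Function.iterate_succ_apply, Fin.tail]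

theorem cylinderOf_append {n m : ℕ} (s : Fin n → α) (t : Fin m → α) :
    cylinderOf T (Fin.append s t) = cylinderOf T s ∩ T^[n] ⁻¹' cylinderOf T t := by
  ext x
  simp only [mem_cylinderOf, mem_inter_iff, mem_preimage, Fin.forall_fin_add, Fin.append_left,
    Fin.append_right, Fin.val_castAdd, Fin.val_natAdd, add_comm n, Function.iterate_add_apply]

theorem image_iterate_cylinderOf (hfull : ∀ a ∈ α, SurjOn T a univ) :
    ∀ {n : ℕ} (s : Fin n → α), T^[n] '' cylinderOf T s = univ
  | 0, s => by simp [cylinderOf_zero]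
  | n + 1, s => by
    rw [cylinderOf_succ, Function.iterate_succ, image_comp, image_inter_preimage,
      eq_univ_of_univ_subset (hfull _ (s 0).2), univ_inter,
      image_iterate_cylinderOf hfull]

theorem cylinderOf_nonempty [Nonempty X] (hfull : ∀ a ∈ α, SurjOn T a univ) {n : ℕ}
    (s : Fin n → α) : (cylinderOf T s).Nonempty := by
  have h := image_iterate_cylinderOf hfull s
  exact (h ▸ univ_nonempty : (T^[n] '' cylinderOf T s).Nonempty).of_image

theorem cylinderOf_mem_cylinders {n : ℕ} {s : Fin n → α} (hne : (cylinderOf T s).Nonempty) :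
    cylinderOf T s ∈ cylinders T α n :=
  ⟨hne, fun j => s j, fun j => (s j).2, rfl⟩

theorem eq_of_mem_cylinderOf (hdisj : α.PairwiseDisjoint id) {n : ℕ} {s t : Fin n → α} {x : X}
    (hs : x ∈ cylinderOf T s) (ht : x ∈ cylinderOf T t) : s = t := by
  funext j
  by_contra hj
  exact disjoint_left.mp (hdisj (s j).2 (t j).2 (Subtype.coe_ne_coe.mpr hj))
    (mem_cylinderOf.mp hs j) (mem_cylinderOf.mp ht j)

theorem exists_mem_cylinderOf (hcover : ⋃₀ α = univ) (n : ℕ) (x : X) :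
    ∃ s : Fin n → α, x ∈ cylinderOf T s := by
  have hx : ∀ j : Fin n, ∃ a : α, T^[(j : ℕ)] x ∈ (a : Set X) := fun j => by
    obtain ⟨a, ha, hxa⟩ := mem_sUnion.mp (hcover ▸ mem_univ (T^[(j : ℕ)] x))
    exact ⟨⟨a, ha⟩, hxa⟩
  choose s hs using hx
  exact ⟨s, mem_cylinderOf.mpr hs⟩

theorem cocycle_eq_of_mem_cylinderOf {G : Type*} [Monoid G] {ψ : X → G}
    (hψ : ∀ a ∈ α, ∀ x ∈ a, ∀ y ∈ a, ψ x = ψ y) :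
    ∀ {n : ℕ} (s : Fin n → α) {x y : X}, x ∈ cylinderOf T s → y ∈ cylinderOf T s →
      cocycle T ψ n x = cocycle T ψ n y
  | 0, _, _, _, _, _ => rfl
  | n + 1, s, x, y, hx, hy => by
    have hx' := mem_cylinderOf.mp hx
    have hy' := mem_cylinderOf.mp hy
    have hxy : ψ (T^[n] x) = ψ (T^[n] y) :=
      hψ _ (s (Fin.last n)).2 _ (hx' (Fin.last n)) _ (hy' (Fin.last n))
    rw [cocycle, cocycle, hxy,
      cocycle_eq_of_mem_cylinderOf hψ (fun j => s j.castSucc)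
        (mem_cylinderOf.mpr fun j => hx' j.castSucc) (mem_cylinderOf.mpr fun j => hy' j.castSucc)]

theorem setOf_cocycle_eq_biUnion {G : Type*} [Monoid G] {ψ : X → G} (hcover : ⋃₀ α = univ)
    (hψ : ∀ a ∈ α, ∀ x ∈ a, ∀ y ∈ a, ψ x = ψ y) (n : ℕ) (g : G) :
    {x | cocycle T ψ n x = g} =
      ⋃ s ∈ {s : Fin n → α | ∀ x ∈ cylinderOf T s, cocycle T ψ n x = g}, cylinderOf T s := by
  refine Subset.antisymm (fun x hx => ?_) (iUnion₂_subset fun s hs => hs)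
  obtain ⟨s, hxs⟩ := exists_mem_cylinderOf hcover n x
  exact mem_biUnion (fun y hy => (cocycle_eq_of_mem_cylinderOf hψ s hy hxs).trans hx) hxs

theorem measurableSet_cylinderOf [MeasurableSpace X] (hT : Measurable T)
    (hα : ∀ a ∈ α, MeasurableSet a) {n : ℕ} (s : Fin n → α) : MeasurableSet (cylinderOf T s) :=
  .iInter fun j => hT.iterate _ (hα _ (s j).2)

end Cylinder

section Measure

variable {X : Type*} [MeasurableSpace X] {μ : Measure X} {T : X → X} {α : Set (Set X)}

theorem measure_biUnion_cylinderOf [Countable α] (hdisj : α.PairwiseDisjoint id)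
    (hT : Measurable T) (hα : ∀ a ∈ α, MeasurableSet a) {n : ℕ} (A : Set (Fin n → α)) :
    μ (⋃ s ∈ A, cylinderOf T s) = ∑' s : A, μ (cylinderOf T s.1) :=
  measure_biUnion A.to_countable
    (fun _ _ _ _ hst => disjoint_left.mpr fun _ hs ht => hst (eq_of_mem_cylinderOf hdisj hs ht))
    (fun s _ => measurableSet_cylinderOf hT hα s)

theorem measure_biUnion_cylinderOf_mul_le [Countable α] (hdisj : α.PairwiseDisjoint id)
    (hT : Measurable T) (hα : ∀ a ∈ α, MeasurableSet a) {n m : ℕ} {K : ℝ≥0∞}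
    (hK : ∀ (s : Fin n → α) (t : Fin m → α), μ (cylinderOf T s) * μ (cylinderOf T t) ≤
      K * μ (cylinderOf T s ∩ T^[n] ⁻¹' cylinderOf T t))
    (A : Set (Fin n → α)) (B : Set (Fin m → α)) :
    μ (⋃ s ∈ A, cylinderOf T s) * μ (⋃ t ∈ B, cylinderOf T t) ≤
      K * μ ((⋃ s ∈ A, cylinderOf T s) ∩ T^[n] ⁻¹' ⋃ t ∈ B, cylinderOf T t) := by
  set f : A × B → Set X := fun p => cylinderOf T p.1.1 ∩ T^[n] ⁻¹' cylinderOf T p.2.1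
  have hf_disj : Pairwise (Function.onFun Disjoint f) := fun p q hpq =>
    disjoint_left.mpr fun _ hp hq =>
      hpq (Prod.ext (Subtype.ext (eq_of_mem_cylinderOf hdisj hp.1 hq.1))
        (Subtype.ext (eq_of_mem_cylinderOf hdisj hp.2 hq.2)))
  have hf_meas : ∀ p, MeasurableSet (f p) := fun _ =>
    (measurableSet_cylinderOf hT hα _).inter (hT.iterate n (measurableSet_cylinderOf hT hα _))
  have hf_sub : ⋃ p, f p ⊆ (⋃ s ∈ A, cylinderOf T s) ∩ T^[n] ⁻¹' ⋃ t ∈ B, cylinderOf T t :=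
    iUnion_subset fun p => inter_subset_inter (subset_biUnion_of_mem p.1.2)
      (preimage_mono (subset_biUnion_of_mem p.2.2))
  calc _ = ∑' (s : A) (t : B), μ (cylinderOf T s.1) * μ (cylinderOf T t.1) := by
        rw [measure_biUnion_cylinderOf hdisj hT hα, measure_biUnion_cylinderOf hdisj hT hα,
          ← ENNReal.tsum_mul_right]
        simp only [ENNReal.tsum_mul_left]
    _ ≤ ∑' (s : A) (t : B), K * μ (f (s, t)) :=
        ENNReal.tsum_le_tsum fun s => ENNReal.tsum_le_tsum fun t => hK s t
    _ = K * μ (⋃ p, f p) := by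
        rw [measure_iUnion hf_disj hf_meas, ← ENNReal.tsum_mul_left,
          ENNReal.tsum_prod (f := fun s t => K * μ (f (s, t)))]
    _ ≤ _ := by gcongr

end Measure

section GibbsMarkov

variable {X : Type*} [MetricSpace X] [MeasurableSpace X] {μ : Measure X} {T : X → X}
  {α : Set (Set X)} {φ : X → ℝ}

namespace IsGibbsMarkov

theorem exists_gibbs_bounds (hGM : IsGibbsMarkov μ T α φ) :
    ∃ C ≥ (1 : ℝ), ∀ n (s : Fin (n + 1) → α), ∀ x ∈ cylinderOf T s,
      (μ (cylinderOf T s)).toReal ≤ C * Real.exp (birkhoff T φ (n + 1) x) ∧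
      Real.exp (birkhoff T φ (n + 1) x) ≤ C * (μ (cylinderOf T s)).toReal := by
  obtain ⟨C, hC, hgibbs⟩ := hGM.gibbs
  refine ⟨max C 1, le_max_right _ _, fun n s x hx => ?_⟩
  obtain ⟨h₁, h₂⟩ := hgibbs n _ (cylinderOf_mem_cylinders ⟨x, hx⟩) x hx
  constructor
  · calc _ ≤ C * Real.exp (birkhoff T φ (n + 1) x) := (div_le_iff₀' hC).mp h₁
      _ ≤ _ := by gcongr; exact le_max_left _ _
  · exact h₂.trans (by gcongr; exact le_max_left _ _)

theorem surjOn (hGM : IsGibbsMarkov μ T α φ) : ∀ a ∈ α, SurjOn T a univ :=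
  fun a ha => (hGM.fullBranches a ha).surjOn

theorem measure_cylinderOf_pos (hGM : IsGibbsMarkov μ T α φ) {n : ℕ} (s : Fin n → α) :
    0 < μ (cylinderOf T s) := by
  have := hGM.prob
  have := nonempty_of_isProbabilityMeasure μ
  cases n with
  | zero => simp [cylinderOf_zero]
  | succ n =>
    obtain ⟨C, hC, hbound⟩ := hGM.exists_gibbs_bounds
    obtain ⟨x, hx⟩ := cylinderOf_nonempty hGM.surjOn s
    have h : 0 < C * (μ (cylinderOf T s)).toReal :=
      (Real.exp_pos _).trans_le (hbound n s x hx).2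
    exact (ENNReal.toReal_pos_iff.mp (pos_of_mul_pos_right h (by linarith))).1

theorem exists_measure_cylinderOf_mul_le (hGM : IsGibbsMarkov μ T α φ) :
    ∃ K ≥ (1 : ℝ), ∀ n m (s : Fin (n + 1) → α) (t : Fin (m + 1) → α),
      μ (cylinderOf T s) * μ (cylinderOf T t) ≤
        ENNReal.ofReal K * μ (cylinderOf T s ∩ T^[n + 1] ⁻¹' cylinderOf T t) := by
  have := hGM.prob
  have := nonempty_of_isProbabilityMeasure μ
  obtain ⟨C, hC, hbound⟩ := hGM.exists_gibbs_bounds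
  refine ⟨C ^ 3, one_le_pow₀ hC, fun n m s t => ?_⟩
  obtain ⟨x, hx⟩ := cylinderOf_nonempty hGM.surjOn (Fin.append s t)
  obtain ⟨-, hst⟩ := hbound (n + 1 + m) (Fin.append s t : Fin (n + 1 + (m + 1)) → α) x hx
  rw [cylinderOf_append] at hx hst
  obtain ⟨hs, -⟩ := hbound n s x hx.1
  obtain ⟨ht, -⟩ := hbound m t _ hx.2
  have hreal : (μ (cylinderOf T s)).toReal * (μ (cylinderOf T t)).toReal ≤
      C ^ 3 * (μ (cylinderOf T s ∩ T^[n + 1] ⁻¹' cylinderOf T t)).toReal :=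
    calc _ ≤ (C * Real.exp (birkhoff T φ (n + 1) x)) *
          (C * Real.exp (birkhoff T φ (m + 1) (T^[n + 1] x))) :=
          mul_le_mul hs ht ENNReal.toReal_nonneg (by positivity)
      _ = C ^ 2 * Real.exp (birkhoff T φ (n + 1 + m + 1) x) := by
          rw [show n + 1 + m + 1 = n + 1 + (m + 1) by ring, birkhoff_add T φ (n + 1) (m + 1),
            Real.exp_add]
          ring
      _ ≤ C ^ 2 * (C * (μ (cylinderOf T s ∩ T^[n + 1] ⁻¹' cylinderOf T t)).toReal) := by
          gcongr
      _ = _ := by ring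
  refine (ENNReal.toReal_le_toReal (by finiteness) (by finiteness)).mp ?_
  rwa [ENNReal.toReal_mul, ENNReal.toReal_mul, ENNReal.toReal_ofReal (by positivity)]

end IsGibbsMarkov

end GibbsMarkov

section LevelSets

variable {X : Type*} [MetricSpace X] [MeasurableSpace X] {μ : Measure X} {T : X → X}
  {α : Set (Set X)} {φ : X → ℝ} {G : Type*} [Monoid G] {ψ : X → G}

namespace IsGibbsMarkov

theorem measure_setOf_cocycle_eq_one_pos (hGM : IsGibbsMarkov μ T α φ)
    (hψ : ∀ a ∈ α, ∀ x ∈ a, ∀ y ∈ a, ψ x = ψ y) (he : ∃ x, ψ x = 1) (n : ℕ) :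
    0 < μ {x | cocycle T ψ n x = 1} := by
  obtain ⟨x₀, hx₀⟩ := he
  obtain ⟨a, ha, hx₀a⟩ := mem_sUnion.mp (hGM.cover ▸ mem_univ x₀)
  refine (hGM.measure_cylinderOf_pos fun _ : Fin n => (⟨a, ha⟩ : α)).trans_le
    (measure_mono fun y hy => ?_)
  exact cocycle_eq_one_of_forall T fun k hk =>
    (hψ a ha _ (mem_cylinderOf.mp hy ⟨k, hk⟩) x₀ hx₀a).trans hx₀

theorem exists_measure_setOf_cocycle_mul_le (hGM : IsGibbsMarkov μ T α φ)
    (hψ : ∀ a ∈ α, ∀ x ∈ a, ∀ y ∈ a, ψ x = ψ y) :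
    ∃ K ≥ (1 : ℝ), ∀ n m,
      (μ {x | cocycle T ψ (n + 1) x = 1}).toReal * (μ {x | cocycle T ψ (m + 1) x = 1}).toReal ≤
        K * (μ {x | cocycle T ψ (n + 1 + (m + 1)) x = 1}).toReal := by
  have := hGM.prob
  have : Countable α := hGM.countable.to_subtype
  obtain ⟨K, hK, hmul⟩ := hGM.exists_measure_cylinderOf_mul_le
  refine ⟨K, hK, fun n m => ?_⟩
  have hsub : {x | cocycle T ψ (n + 1) x = 1} ∩ T^[n + 1] ⁻¹' {x | cocycle T ψ (m + 1) x = 1} ⊆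
      {x | cocycle T ψ (n + 1 + (m + 1)) x = 1} := fun x hx =>
    (cocycle_add T ψ _ _ x).trans (by rw [hx.1, hx.2, one_mul])
  have h : μ {x | cocycle T ψ (n + 1) x = 1} * μ {x | cocycle T ψ (m + 1) x = 1} ≤
      ENNReal.ofReal K *
        μ ({x | cocycle T ψ (n + 1) x = 1} ∩ T^[n + 1] ⁻¹' {x | cocycle T ψ (m + 1) x = 1}) := by
    rw [setOf_cocycle_eq_biUnion hGM.cover hψ, setOf_cocycle_eq_biUnion hGM.cover hψ]
    exact measure_biUnion_cylinderOf_mul_le hGM.pairwiseDisjoint hGM.measurable_T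
      hGM.measurableSet (hmul n m) _ _
  have h' := ENNReal.toReal_mono (by finiteness)
    (h.trans (mul_le_mul_right (measure_mono hsub) _))
  rwa [ENNReal.toReal_mul, ENNReal.toReal_mul, ENNReal.toReal_ofReal (by positivity)] at h'

end IsGibbsMarkov

end LevelSets

theorem mun_log_limit_exists_general
    {X : Type*} [MetricSpace X] [MeasurableSpace X]
    {G : Type*} [Group G]
    {μ : Measure X} {T : X → X} {α : Set (Set X)} {φ : X → ℝ}
    (hGM : IsGibbsMarkov μ T α φ)
    {ψ : X → G}
    (hψconst : ∀ a ∈ α, ∀ x ∈ a, ∀ y ∈ a, ψ x = ψ y)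
    (he : ∃ x, ψ x = 1) :
    ∃ L : ℝ, L ≤ 0 ∧
      Tendsto (fun n : ℕ =>
        Real.log (μ {x | cocycle T ψ n x = (1 : G)}).toReal / n) atTop (𝓝 L) := by
  have := hGM.prob
  obtain ⟨K, hK, hmul⟩ := hGM.exists_measure_setOf_cocycle_mul_le hψconst
  exact exists_tendsto_log_div_of_supermultiplicative hK
    (fun n => ENNReal.toReal_pos (hGM.measure_setOf_cocycle_eq_one_pos hψconst he n).ne'
      (measure_ne_top _ _))
    (fun n => ENNReal.toReal_le_of_le_ofReal zero_le_one (by simpa using prob_le_one)) hmul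

/-- The limit `lim_n (1/n)·log μ^n(e)` exists and is finite
(it lies in `(−∞, 0]`). -/
theorem mun_log_limit_exists
    {X : Type*} [MetricSpace X] [MeasurableSpace X] [BorelSpace X]
    {G : Type*} [Group G] [Countable G]
    {μ : Measure X} {T : X → X} {α : Set (Set X)} {φ : X → ℝ}
    (hGM : IsGibbsMarkov μ T α φ)
    (hpos : ∀ n : ℕ, ∀ c ∈ cylinders T α n, 0 < μ c)
    {ψ : X → G}
    (hψconst : ∀ a ∈ α, ∀ x ∈ a, ∀ y ∈ a, ψ x = ψ y)
    (he : ∃ x, ψ x = 1) :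
    ∃ L : ℝ, L ≤ 0 ∧
      Tendsto (fun n : ℕ =>
        Real.log (μ {x | cocycle T ψ n x = (1 : G)}).toReal / n) atTop (𝓝 L) :=
  mun_log_limit_exists_general hGM hψconst he
end
end
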